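/- arXiv:2408.05509 — 7 statements merged into one kernel-verified Lean document; each statement's English description precedes it below -/
import Mathlib

section
/- Let F be a field, let C be a k-dimensional linear code of length n over F, and let G be a k×n generator matrix for C (i.e., the rows of G span C). Then C is an LCED code if and only if there exists an n×n permutation matrix P such that the k×k matrix G·P·Gᵀ is invertible. -/
open Matrix

/-- The permutation matrix of `σ`: the `(i, j)` entry is `1` if `σ j = i` and `0` otherwise. -/
def permMat (F : Type*) [Zero F] [One F] {n : Type*} [DecidableEq n]
    (σ : Equiv.Perm n) : Matrix n n F :=
  Matrix.of fun i j => if σ j = i then 1 else 0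

/-- A matrix `G` over a field is an LCED matrix if there is a permutation matrix `P`
such that `G * P * Gᵀ` is invertible. -/
def IsLCEDMatrix {F : Type*} [Field F] {k n : Type*} [Fintype k] [Fintype n]
    [DecidableEq k] [DecidableEq n] (G : Matrix k n F) : Prop :=
  ∃ σ : Equiv.Perm n, IsUnit (G * permMat F σ * Gᵀ)

/-- The dual code of `C`: all vectors orthogonal (w.r.t. the standard bilinear form)
to every codeword of `C`. -/
def dualCode {F : Type*} [Field F] {n : ℕ} (C : Submodule F (Fin n → F)) :
    Submodule F (Fin n → F) where
  carrier := {x | ∀ c ∈ C, ∑ i, x i * c i = 0}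
  add_mem' := by
    intro a b ha hb c hc
    simp only [Set.mem_setOf_eq] at *
    simp [add_mul, Finset.sum_add_distrib, ha c hc, hb c hc]
  zero_mem' := by
    intro c hc
    simp
  smul_mem' := by
    intro t a ha c hc
    simp only [Set.mem_setOf_eq] at *
    simp [smul_eq_mul, mul_assoc, ← Finset.mul_sum, ha c hc]

/-- `C` is an LCED (linear complementary equi-dual) code if there is a linear code `D`
permutation equivalent to the dual code `C⊥` such that `Fⁿ = C ⊕ D`. -/
def IsLCEDCode {F : Type*} [Field F] {n : ℕ} (C : Submodule F (Fin n → F)) : Prop :=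
  ∃ D : Submodule F (Fin n → F),
    (∃ σ : Equiv.Perm (Fin n), ∀ x : Fin n → F, x ∈ D ↔ (fun j => x (σ j)) ∈ dualCode C) ∧
    IsCompl C D

/-! Let `D_σ = {x | x ∘ σ ∈ C⊥}`; the LCED witnesses `D` are exactly these codes. Since `C⊥`, hence
every `D_σ`, has dimension `n - k`, `C ⊕ D_σ = Fⁿ` as soon as `C ∩ D_σ = 0`. A codeword `v G`
lies in `D_σ` iff `G ((v G) ∘ σ) = 0`, i.e. `v (G P_σ Gᵀ) = 0`; as the rows of `G` are independent,
`C ∩ D_σ = 0` says precisely that `G P_σ Gᵀ` has trivial left kernel, i.e. is invertible. -/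

open Module

theorem vecMul_permMat {R : Type*} [NonAssocSemiring R] {n : Type*} [Fintype n] [DecidableEq n]
    (x : n → R) (σ : Equiv.Perm n) : x ᵥ* permMat R σ = x ∘ σ := by
  ext j
  simp [vecMul, dotProduct, permMat]

theorem nondegenerate_dotProductBilin {R : Type*} [CommRing R] {m : Type*} [Fintype m] :
    (dotProductBilin R R : LinearMap.BilinForm R (m → R)).Nondegenerate :=
  ⟨fun _ hx => dotProduct_eq_zero_iff.1 hx,
    fun _ hy => dotProduct_eq_zero_iff.1 fun w => by rw [dotProduct_comm]; exact hy w⟩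

section DualCode

variable {F : Type*} [Field F] {n : ℕ}

theorem dualCode_eq_orthogonal (C : Submodule F (Fin n → F)) :
    dualCode C = LinearMap.BilinForm.orthogonal (dotProductBilin F F) C := by
  ext x
  simp only [LinearMap.BilinForm.orthogonal, Submodule.mem_orthogonalBilin_iff,
    dotProductBilin_apply_apply]
  exact forall₂_congr fun c _ => by rw [dotProduct_comm]; rfl

theorem finrank_add_finrank_dualCode (C : Submodule F (Fin n → F)) :
    finrank F C + finrank F (dualCode C) = n := by
  rw [dualCode_eq_orthogonal,
    LinearMap.BilinForm.finrank_orthogonal nondegenerate_dotProductBilin]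
  have := Submodule.finrank_le C
  simp only [finrank_fin_fun] at this ⊢
  omega

theorem mem_dualCode_range_vecMulLinear_iff {k : Type*} [Fintype k] (G : Matrix k (Fin n) F)
    (x : Fin n → F) : x ∈ dualCode (LinearMap.range G.vecMulLinear) ↔ G *ᵥ x = 0 := by
  rw [← dotProduct_eq_zero_iff]
  change (∀ c ∈ LinearMap.range G.vecMulLinear, x ⬝ᵥ c = 0) ↔ _
  simp only [LinearMap.mem_range, vecMulLinear_apply, forall_exists_index, forall_apply_eq_imp_iff]
  exact forall_congr' fun v => by rw [dotProduct_comm, ← dotProduct_mulVec, dotProduct_comm]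

def permDualCode (C : Submodule F (Fin n → F)) (σ : Equiv.Perm (Fin n)) :
    Submodule F (Fin n → F) :=
  (dualCode C).comap (LinearEquiv.funCongrLeft F F σ).toLinearMap

theorem mem_permDualCode {C : Submodule F (Fin n → F)} {σ : Equiv.Perm (Fin n)}
    {x : Fin n → F} : x ∈ permDualCode C σ ↔ x ∘ σ ∈ dualCode C :=
  Iff.rfl

theorem finrank_permDualCode (C : Submodule F (Fin n → F)) (σ : Equiv.Perm (Fin n)) :
    finrank F (permDualCode C σ) = finrank F (dualCode C) := by
  rw [permDualCode, Submodule.comap_equiv_eq_map_symm]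
  exact LinearEquiv.finrank_map_eq _ _

theorem isLCEDCode_iff_exists_isCompl_permDualCode (C : Submodule F (Fin n → F)) :
    IsLCEDCode C ↔ ∃ σ, IsCompl C (permDualCode C σ) := by
  constructor
  · rintro ⟨D, ⟨σ, hD⟩, hCD⟩
    obtain rfl : D = permDualCode C σ := Submodule.ext hD
    exact ⟨σ, hCD⟩
  · rintro ⟨σ, hσ⟩
    exact ⟨_, ⟨σ, fun _ => mem_permDualCode⟩, hσ⟩

theorem isCompl_permDualCode_iff_disjoint (C : Submodule F (Fin n → F))
    (σ : Equiv.Perm (Fin n)) : IsCompl C (permDualCode C σ) ↔ Disjoint C (permDualCode C σ) :=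
  Submodule.isCompl_iff_disjoint _ _ <| by
    rw [finrank_permDualCode, finrank_add_finrank_dualCode, finrank_fin_fun]

section GeneratorMatrix

variable {k : Type*} [Fintype k] (G : Matrix k (Fin n) F) (σ : Equiv.Perm (Fin n))

theorem vecMul_mem_permDualCode_iff (v : k → F) :
    v ᵥ* G ∈ permDualCode (LinearMap.range G.vecMulLinear) σ ↔
      v ᵥ* (G * permMat F σ * Gᵀ) = 0 := by
  rw [mem_permDualCode, ← vecMul_permMat, mem_dualCode_range_vecMulLinear_iff,
    ← vecMul_transpose, vecMul_vecMul, vecMul_vecMul, Matrix.mul_assoc]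

theorem disjoint_permDualCode_iff_isUnit [DecidableEq k] (hG : Function.Injective G.vecMul) :
    Disjoint (LinearMap.range G.vecMulLinear) (permDualCode (LinearMap.range G.vecMulLinear) σ) ↔
      IsUnit (G * permMat F σ * Gᵀ) := by
  rw [← vecMul_injective_iff_isUnit, ← coe_vecMulLinear, injective_iff_map_eq_zero,
    Submodule.disjoint_def]
  simp only [vecMulLinear_apply, LinearMap.mem_range, forall_exists_index,
    forall_apply_eq_imp_iff, vecMul_mem_permDualCode_iff]
  exact ⟨fun h v hv => hG <| (h v hv).trans (zero_vecMul G).symm,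
    fun h v hv => by rw [h v hv, zero_vecMul]⟩

end GeneratorMatrix

end DualCode

/-- `C` (of dimension `k`, with `k × n` generator matrix `G`) is an LCED code
iff `G * P * Gᵀ` is invertible for some permutation matrix `P`. -/
theorem stmt0 {F : Type*} [Field F] {k n : ℕ} (C : Submodule F (Fin n → F))
    (G : Matrix (Fin k) (Fin n) F)
    (hspan : Submodule.span F (Set.range fun i => G i) = C)
    (hdim : Module.finrank F C = k) :
    IsLCEDCode C ↔ ∃ σ : Equiv.Perm (Fin n), IsUnit (G * permMat F σ * Gᵀ) := by
  obtain rfl : LinearMap.range G.vecMulLinear = C := by rw [range_vecMulLinear, ← hspan]; rfl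
  have hG : Function.Injective G.vecMul := by
    rw [vecMul_injective_iff, linearIndependent_iff_card_eq_finrank_span, Set.finrank,
      ← range_vecMulLinear, hdim, Fintype.card_fin]
  rw [isLCEDCode_iff_exists_isCompl_permDualCode]
  exact exists_congr fun σ =>
    (isCompl_permDualCode_iff_disjoint _ σ).trans (disjoint_permDualCode_iff_isUnit G σ hG)
end

section
/- Let F be a field of characteristic 2, let g(x) = Σ_{i=0}^{r} g_i·x^i be a monic polynomial of degree r over F with g_0 ≠ 0, and set n = 3r. Let g*(x) = x^r·g(1/x) be the reciprocal polynomial of g, and suppose that g(x)·g*(x) = g_0 + g(1)²·x^r + g_0·x^{2r}. Let G be the 2r×n matrix whose s-th row (for 0 ≤ s ≤ 2r−1) is the vector (0,…,0, g_0, g_1, …, g_r, 0,…,0) with g_0 in position s (i.e., the s-fold right cyclic shift of the coefficient vector of g padded with zeros). Then G is an LCED matrix; consequently the cyclic code of length n generated by g, which has generator matrix G, is an LCED code. -/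
/-!
Split the rows of `G` into two blocks and the columns into three blocks of size `r`. With `L` the
upper triangular Toeplitz block of `g₀, …, g_{r-1}` and `U` the Toeplitz block of `g₁, …, g_r`,
`G = [[L, U, 0], [0, L, U]]`. Swapping the first two column blocks gives
`G P Gᵀ = [[U Lᵀ + L Uᵀ, L Lᵀ], [L Lᵀ, U Uᵀ]]`. The entries of `U Lᵀ` are the correlations
`∑ gᵢ g_{i+d}`, i.e. coefficients of `g · g*`, so the hypothesis on `g · g*` says `U Lᵀ = g₀ I`;
in characteristic 2 the top left block then vanishes, and the matrix is invertible because
`det L = g₀ʳ ≠ 0`. For the code, `ker (G P)` is a complement of the row space of `G` as soon as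
`G P Gᵀ` is invertible, and it is the dual code with coordinates permuted.
-/

open Matrix

/-- The `2r × 3r` matrix whose `s`-th row is the `s`-fold right shift of the coefficient
vector of `g`, padded with zeros. -/
def shiftMat {F : Type*} [Field F] (g : Polynomial F) (r : ℕ) :
    Matrix (Fin (2 * r)) (Fin (3 * r)) F :=
  Matrix.of fun s j => if (s : ℕ) ≤ (j : ℕ) then g.coeff ((j : ℕ) - (s : ℕ)) else 0

open Polynomial Finset

theorem mul_permMat {m n R : Type*} [Fintype n] [DecidableEq n] [NonAssocSemiring R]
    (G : Matrix m n R) (σ : Equiv.Perm n) : G * permMat R σ = G.submatrix id σ := by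
  ext s j
  simp [mul_apply, permMat]

theorem permMat_mulVec {n R : Type*} [Fintype n] [DecidableEq n] [NonAssocSemiring R]
    (σ : Equiv.Perm n) (x : n → R) : permMat R σ *ᵥ x = x ∘ σ.symm := by
  rw [← one_mul (permMat R σ), mul_permMat, submatrix_mulVec_equiv, one_mulVec]
  rfl

section LCED

variable {F : Type*} [Field F]

theorem IsLCEDMatrix.of_submatrix {k n k' n' : Type*} [Fintype k] [Fintype n] [DecidableEq k]
    [DecidableEq n] [Fintype k'] [Fintype n'] [DecidableEq k'] [DecidableEq n']
    {G : Matrix k n F} (e : k' ≃ k) (f : n' ≃ n) (h : IsLCEDMatrix (G.submatrix e f)) :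
    IsLCEDMatrix G := by
  obtain ⟨τ, hτ⟩ := h
  refine ⟨f.symm.trans (τ.trans f), ?_⟩
  rw [mul_permMat] at hτ ⊢
  rw [← isUnit_submatrix_equiv e e, ← submatrix_mul_equiv _ _ _ f]
  convert hτ using 2
  · ext
    simp
  · rfl

theorem LinearMap.isCompl_range_ker_of_bijective_comp {R V W : Type*} [Ring R]
    [AddCommGroup V] [Module R V] [AddCommGroup W] [Module R W] {f : V →ₗ[R] W}
    {g : W →ₗ[R] V} (h : Function.Bijective (f ∘ₗ g)) :
    IsCompl (LinearMap.range g) (LinearMap.ker f) := by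
  constructor
  · rw [LinearMap.disjoint_ker]
    rintro _ ⟨w, rfl⟩ hw
    rw [h.injective (hw.trans (map_zero (f ∘ₗ g)).symm), map_zero]
  · rw [codisjoint_iff, eq_top_iff]
    intro x _
    obtain ⟨w, hw⟩ := h.surjective (f x)
    refine Submodule.mem_sup.mpr ⟨g w, ⟨w, rfl⟩, x - g w, ?_, add_sub_cancel _ _⟩
    rw [LinearMap.mem_ker, map_sub, ← LinearMap.comp_apply, hw, sub_self]

theorem mem_dualCode_span_row_iff {k n : ℕ} (G : Matrix (Fin k) (Fin n) F) (y : Fin n → F) :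
    y ∈ dualCode (Submodule.span F (Set.range fun s => G s)) ↔ G *ᵥ y = 0 := by
  change (∀ c ∈ _, c ∈ LinearMap.ker (dotProductBilin F F y)) ↔ _
  rw [← SetLike.le_def, Submodule.span_le, Set.range_subset_iff, funext_iff]
  simp [mulVec, dotProduct_comm]

theorem IsLCEDMatrix.isLCEDCode {k n : ℕ} {G : Matrix (Fin k) (Fin n) F}
    (h : IsLCEDMatrix G) : IsLCEDCode (Submodule.span F (Set.range fun s => G s)) := by
  obtain ⟨σ, hσ⟩ := h
  refine ⟨LinearMap.ker (G * permMat F σ).mulVecLin, ⟨σ.symm, fun x => ?_⟩, ?_⟩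
  · rw [LinearMap.mem_ker, mulVecLin_apply, mem_dualCode_span_row_iff, ← mulVec_mulVec,
      permMat_mulVec]
    rfl
  · have hbij : Function.Bijective ((G * permMat F σ).mulVecLin ∘ₗ Gᵀ.mulVecLin) := by
      rw [← mulVecLin_mul]
      exact ⟨mulVec_injective_iff_isUnit.mpr hσ, mulVec_surjective_iff_isUnit.mpr hσ⟩
    have hcompl := LinearMap.isCompl_range_ker_of_bijective_comp hbij
    rwa [range_mulVecLin] at hcompl

end LCED

section Blocks

variable {F : Type*} [Field F] {m : Type*} [Fintype m] [DecidableEq m]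

theorem isUnit_fromBlocks_zero₁₁ {R : Type*} [CommRing R]
    {B C D : Matrix m m R} (hB : IsUnit B) (hC : IsUnit C) : IsUnit (fromBlocks 0 B C D) := by
  rw [← isUnit_submatrix_equiv (Equiv.refl _) (Equiv.sumComm m m)]
  simp [hB, hC]

theorem isLCEDMatrix_fromBlocks_fromCols [CharP F 2] {L U : Matrix m m F} (hL : IsUnit L)
    (hUL : (U * Lᵀ)ᵀ = U * Lᵀ) :
    IsLCEDMatrix (fromBlocks (fromCols L U) 0 (fromCols 0 L) U) := by
  refine ⟨Equiv.sumCongr (Equiv.sumComm m m) (Equiv.refl m), ?_⟩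
  have hswap : (fromBlocks (fromCols L U) 0 (fromCols 0 L) U).submatrix id
      (Equiv.sumCongr (Equiv.sumComm m m) (Equiv.refl m)) =
      fromBlocks (fromCols U L) 0 (fromCols L 0) U := by
    ext (s | s) ((j | j) | j) <;> simp
  have hsum : U * Lᵀ + L * Uᵀ = 0 := by
    rw [← hUL, transpose_mul, transpose_transpose, ← two_smul F, CharTwo.two_eq_zero, zero_smul]
  rw [mul_permMat, hswap, fromBlocks_transpose, fromBlocks_multiply]
  simp only [transpose_fromCols, fromCols_mul_fromRows, transpose_zero, mul_zero, zero_mul,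
    add_zero, zero_add, hsum]
  have h : IsUnit (L * Lᵀ) := hL.mul ((isUnit_transpose L).mpr hL)
  exact isUnit_fromBlocks_zero₁₁ h h

end Blocks

section ShiftMatrix

variable {F : Type*} [Field F]

-- `L = shiftBlock g r 0` and `U = shiftBlock g r 1` are the column blocks of the top rows.
def shiftBlock (g : F[X]) (r k : ℕ) : Matrix (Fin r) (Fin r) F :=
  of fun s j => if (s : ℕ) ≤ k * r + j then g.coeff (k * r + j - s) else 0

def finSumFinEquivTwoMul (r : ℕ) : Fin r ⊕ Fin r ≃ Fin (2 * r) :=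
  finSumFinEquiv.trans (finCongr (two_mul r).symm)

def finSumFinEquivThreeMul (r : ℕ) : (Fin r ⊕ Fin r) ⊕ Fin r ≃ Fin (3 * r) :=
  (Equiv.sumCongr finSumFinEquiv (Equiv.refl _)).trans (finSumFinEquiv.trans (finCongr (by ring)))

theorem shiftMat_submatrix {g : F[X]} {r : ℕ} (hdeg : g.natDegree ≤ r) :
    (shiftMat g r).submatrix (finSumFinEquivTwoMul r) (finSumFinEquivThreeMul r) =
      fromBlocks (fromCols (shiftBlock g r 0) (shiftBlock g r 1)) 0
        (fromCols 0 (shiftBlock g r 0)) (shiftBlock g r 1) := by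
  ext (s | s) ((j | j) | j) <;>
    simp [shiftMat, shiftBlock, finSumFinEquivTwoMul, finSumFinEquivThreeMul]
  all_goals first
    | exact fun _ => coeff_eq_zero_of_natDegree_lt (by omega)
    | omega
    | split_ifs <;> first | rfl | omega | congr 1; omega

theorem sum_coeff_mul_coeff_add_eq_coeff_mul_reverse {g : F[X]} {r d N : ℕ}
    (hdeg : g.natDegree = r) (hd : d ≤ r) (hN : r - d < N) :
    ∑ i ∈ range N, g.coeff i * g.coeff (i + d) = (g * g.reverse).coeff (r - d) := by
  calc ∑ i ∈ range N, g.coeff i * g.coeff (i + d)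
      = ∑ i ∈ range (r - d + 1), g.coeff i * g.coeff (i + d) := by
        refine (sum_subset (range_subset_range.mpr hN) fun i _ hi => ?_).symm
        rw [coeff_eq_zero_of_natDegree_lt (n := i + d) (by simp at hi; omega), mul_zero]
    _ = ∑ i ∈ range (r - d + 1), g.coeff i * g.reverse.coeff (r - d - i) := by
        refine sum_congr rfl fun i hi => ?_
        rw [mem_range] at hi
        rw [coeff_reverse, hdeg, revAt_le (by omega), show r - (r - d - i) = i + d by omega]
    _ = (g * g.reverse).coeff (r - d) := by
        rw [coeff_mul, Nat.sum_antidiagonal_eq_sum_range_succ_mk]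

theorem sum_range_ite_le_eq_sum_range_sub {M : Type*} [AddCommMonoid M] {t r : ℕ} (ht : t ≤ r)
    (f : ℕ → M) :
    ∑ j ∈ range r, (if t ≤ j then f (j - t) else 0) = ∑ i ∈ range (r - t), f i := by
  rw [← sum_range_add_sum_Ico _ ht, sum_Ico_eq_sum_range,
    sum_eq_zero fun j hj => if_neg (by simp at hj; omega), zero_add]
  exact sum_congr rfl fun i _ => by simp

theorem shiftBlock_one_mul_transpose_shiftBlock_zero {g : F[X]} {r : ℕ} (hdeg : g.natDegree = r)
    (hcond : g * g.reverse =
      C (g.coeff 0) + C (g.eval 1 ^ 2) * X ^ r + C (g.coeff 0) * X ^ (2 * r)) :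
    shiftBlock g r 1 * (shiftBlock g r 0)ᵀ = g.coeff 0 • 1 := by
  ext s t
  have hterm : ∀ j : Fin r, shiftBlock g r 1 s j * (shiftBlock g r 0)ᵀ j t =
      if (t : ℕ) ≤ j then g.coeff (j - t) * g.coeff (j - t + (r + t - s)) else 0 := by
    intro j
    simp only [shiftBlock, of_apply, transpose_apply, one_mul, zero_mul, zero_add]
    rw [if_pos (by omega)]
    split_ifs
    · rw [mul_comm]
      congr 2
      omega
    · rw [mul_zero]
  rw [mul_apply, sum_congr rfl fun j _ => hterm j,
    Fin.sum_univ_eq_sum_range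
      (fun j => if (t : ℕ) ≤ j then g.coeff (j - t) * g.coeff (j - t + (r + t - s)) else 0),
    sum_range_ite_le_eq_sum_range_sub t.isLt.le (fun i => g.coeff i * g.coeff (i + (r + t - s))),
    Matrix.smul_apply, one_apply, smul_eq_mul, mul_ite, mul_one, mul_zero]
  rcases le_or_gt (t : ℕ) s with hts | hst
  · rw [sum_coeff_mul_coeff_add_eq_coeff_mul_reverse hdeg (by omega) (by omega), hcond]
    simp only [coeff_add, coeff_C, coeff_C_mul, coeff_X_pow]
    rw [if_neg (show r - (r + t - s) ≠ r by omega),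
      if_neg (show r - (r + t - s) ≠ 2 * r by omega), mul_zero, mul_zero, add_zero, add_zero]
    exact if_congr (by rw [Fin.ext_iff]; omega) rfl rfl
  · rw [if_neg (by rw [Fin.ext_iff]; omega)]
    refine sum_eq_zero fun i _ => ?_
    rw [coeff_eq_zero_of_natDegree_lt (n := i + (r + t - s)) (by omega), mul_zero]

theorem det_shiftBlock_zero (g : F[X]) (r : ℕ) :
    (shiftBlock g r 0).det = g.coeff 0 ^ r := by
  have htri : (shiftBlock g r 0).IsUpperTriangular := fun s j hjs => by
    simp only [shiftBlock, of_apply, zero_mul, zero_add]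
    exact if_neg (by simp only [id] at hjs; omega)
  rw [det_of_isUpperTriangular htri]
  simp [shiftBlock]

end ShiftMatrix

theorem stmt1_general {F : Type*} [Field F] [CharP F 2] {r : ℕ} (g : Polynomial F)
    (hdeg : g.natDegree = r) (h0 : g.coeff 0 ≠ 0)
    (hcond : g * g.reverse =
      Polynomial.C (g.coeff 0) + Polynomial.C (g.eval 1 ^ 2) * Polynomial.X ^ r +
        Polynomial.C (g.coeff 0) * Polynomial.X ^ (2 * r)) :
    IsLCEDMatrix (shiftMat g r) ∧
    IsLCEDCode (Submodule.span F (Set.range fun s => shiftMat g r s)) := by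
  have hL : IsUnit (shiftBlock g r 0) := by
    rw [isUnit_iff_isUnit_det, det_shiftBlock_zero]
    exact (isUnit_iff_ne_zero.mpr h0).pow r
  have hUL := shiftBlock_one_mul_transpose_shiftBlock_zero hdeg hcond
  have hG : IsLCEDMatrix (shiftMat g r) := by
    refine IsLCEDMatrix.of_submatrix (finSumFinEquivTwoMul r) (finSumFinEquivThreeMul r) ?_
    rw [shiftMat_submatrix hdeg.le]
    exact isLCEDMatrix_fromBlocks_fromCols hL (by rw [hUL]; simp)
  exact ⟨hG, hG.isLCEDCode⟩

/-- over a field of characteristic 2, if the degree-`r` monic polynomial `g`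
(with nonzero constant term) satisfies `g·g* = g₀ + g(1)²·x^r + g₀·x^{2r}`, then the
`2r × 3r` generator matrix `G` of the corresponding cyclic code of length `n = 3r` is an
LCED matrix; consequently the cyclic code generated by `g` (the row space of `G`) is an
LCED code. -/
theorem stmt1 {F : Type*} [Field F] [CharP F 2] {r : ℕ} (g : Polynomial F)
    (hg : g.Monic) (hdeg : g.natDegree = r) (h0 : g.coeff 0 ≠ 0)
    (hcond : g * g.reverse =
      Polynomial.C (g.coeff 0) + Polynomial.C (g.eval 1 ^ 2) * Polynomial.X ^ r +
        Polynomial.C (g.coeff 0) * Polynomial.X ^ (2 * r)) :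
    IsLCEDMatrix (shiftMat g r) ∧
    IsLCEDCode (Submodule.span F (Set.range fun s => shiftMat g r s)) :=
  stmt1_general g hdeg h0 hcond
end

section
/- Let F be a field, A a k×(n−k) matrix over F, P a k×k permutation matrix, and P' an (n−k)×(n−k) permutation matrix. The following are equivalent: (i) the block matrix (I_k | A) is an LCED matrix; (ii) (I_k | P·A) is an LCED matrix; (iii) (I_k | A·P') is an LCED matrix. -/
open Matrix

/-!
Left multiplication by an invertible `Q` turns `G P Gᵀ` into `Q (G P Gᵀ) Qᵀ`, and right
multiplication by a permutation matrix `P_τ` turns `G P_σ Gᵀ` into `G P_{τστ⁻¹} Gᵀ`, so being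
LCED is invariant under both. It remains to note `(I | P A) = P (I | A) diag(P⁻¹, I)` and
`(I | A P') = (I | A) diag(I, P')`.
-/

section permMat

variable {R : Type*} [Semiring R] {n : Type*} [Fintype n] [DecidableEq n]

theorem permMat_eq_permMatrixHom (σ : Equiv.Perm n) :
    permMat R σ = permMatrixHom (R := R) σ := by
  ext i j
  simp [permMat, PEquiv.toMatrix_apply, Equiv.eq_symm_apply, eq_comm]

theorem permMat_mul (σ τ : Equiv.Perm n) : permMat R σ * permMat R τ = permMat R (σ * τ) := by
  simp only [permMat_eq_permMatrixHom, map_mul]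

theorem permMat_one : permMat R (1 : Equiv.Perm n) = 1 := by
  rw [permMat_eq_permMatrixHom, map_one]

theorem transpose_permMat (σ : Equiv.Perm n) : (permMat R σ)ᵀ = permMat R σ⁻¹ := by
  simp [permMat_eq_permMatrixHom]

theorem isUnit_permMat (σ : Equiv.Perm n) : IsUnit (permMat R σ) := by
  rw [permMat_eq_permMatrixHom]
  exact (Group.isUnit σ).map _

end permMat

theorem permMat_sumCongr {R : Type*} [Zero R] [One R] {k m : Type*} [DecidableEq k]
    [DecidableEq m] (σ : Equiv.Perm k) (τ : Equiv.Perm m) :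
    permMat R (Equiv.sumCongr σ τ) = fromBlocks (permMat R σ) 0 0 (permMat R τ) := by
  ext (i | i) (j | j) <;> simp [permMat]

theorem fromCols_mul_permMat_sumCongr {R : Type*} [Semiring R] {l k m : Type*} [Fintype k]
    [Fintype m] [DecidableEq k] [DecidableEq m] (B : Matrix l k R) (C : Matrix l m R)
    (σ : Equiv.Perm k) (τ : Equiv.Perm m) :
    fromCols B C * permMat R (Equiv.sumCongr σ τ) =
      fromCols (B * permMat R σ) (C * permMat R τ) := by
  simp [permMat_sumCongr, fromCols_mul_fromBlocks]

section fromCols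

variable {R : Type*} [Semiring R] {k m : Type*} [Fintype k] [Fintype m] [DecidableEq k]
  [DecidableEq m]

theorem fromCols_one_permMat_mul (σ : Equiv.Perm k) (A : Matrix k m R) :
    fromCols (1 : Matrix k k R) (permMat R σ * A) =
      permMat R σ * fromCols (1 : Matrix k k R) A *
        permMat R (Equiv.sumCongr σ⁻¹ (1 : Equiv.Perm m)) := by
  rw [Matrix.mul_assoc, fromCols_mul_permMat_sumCongr, mul_fromCols, Matrix.one_mul, permMat_mul,
    mul_inv_cancel, permMat_one, permMat_one, Matrix.mul_one]

theorem fromCols_one_mul_permMat (τ : Equiv.Perm m) (A : Matrix k m R) :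
    fromCols (1 : Matrix k k R) (A * permMat R τ) =
      fromCols (1 : Matrix k k R) A * permMat R (Equiv.sumCongr (1 : Equiv.Perm k) τ) := by
  rw [fromCols_mul_permMat_sumCongr, permMat_one, Matrix.mul_one]

end fromCols

section IsLCEDMatrix

variable {F : Type*} [Field F] {k n : Type*} [Fintype k] [Fintype n] [DecidableEq k]
  [DecidableEq n]

theorem isLCEDMatrix_mul_left_iff {Q : Matrix k k F} (hQ : IsUnit Q) (G : Matrix k n F) :
    IsLCEDMatrix (Q * G) ↔ IsLCEDMatrix G := by
  obtain ⟨u, rfl⟩ := hQ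
  obtain ⟨v, hv⟩ := (isUnit_transpose (u : Matrix k k F)).mpr u.isUnit
  refine exists_congr fun σ => ?_
  have hconj : (u : Matrix k k F) * G * permMat F σ * (Gᵀ * (v : Matrix k k F)) =
      (u : Matrix k k F) * (G * permMat F σ * Gᵀ) * (v : Matrix k k F) := by
    simp only [Matrix.mul_assoc]
  rw [transpose_mul, ← hv, hconj, Units.isUnit_mul_units, Units.isUnit_units_mul]

theorem isLCEDMatrix_mul_permMat_iff (τ : Equiv.Perm n) (G : Matrix k n F) :
    IsLCEDMatrix (G * permMat F τ) ↔ IsLCEDMatrix G := by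
  refine (MulAut.conj τ).toEquiv.exists_congr fun σ => ?_
  rw [transpose_mul, transpose_permMat, MulEquiv.toEquiv_eq_coe, MulEquiv.coe_toEquiv,
    MulAut.conj_apply, ← permMat_mul, ← permMat_mul]
  simp only [Matrix.mul_assoc]

end IsLCEDMatrix

/-- `(I_k | A)` is LCED iff `(I_k | P·A)` is LCED iff `(I_k | A·P')` is LCED,
for permutation matrices `P` (of size `k`) and `P'` (of size `n - k`). -/
theorem stmt3 {F : Type*} [Field F] {k m : ℕ} (A : Matrix (Fin k) (Fin m) F)
    (P : Equiv.Perm (Fin k)) (P' : Equiv.Perm (Fin m)) :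
    (IsLCEDMatrix (fromCols (1 : Matrix (Fin k) (Fin k) F) A) ↔
      IsLCEDMatrix (fromCols (1 : Matrix (Fin k) (Fin k) F) (permMat F P * A))) ∧
    (IsLCEDMatrix (fromCols (1 : Matrix (Fin k) (Fin k) F) A) ↔
      IsLCEDMatrix (fromCols (1 : Matrix (Fin k) (Fin k) F) (A * permMat F P'))) := by
  rw [fromCols_one_permMat_mul, fromCols_one_mul_permMat, isLCEDMatrix_mul_permMat_iff,
    isLCEDMatrix_mul_left_iff (isUnit_permMat P), isLCEDMatrix_mul_permMat_iff]
  exact ⟨Iff.rfl, Iff.rfl⟩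
end

section
/- Let F be a field, n = k+1, and let G = (I_k | a) be the k×(k+1) matrix whose last column is a = (a_1,…,a_k)ᵀ ∈ F^k. Let π be a permutation of {1,…,k+1} with π(k+1) ≠ k+1, let P_π be its permutation matrix, and set i = π(k+1) and j = π⁻¹(k+1). Then det(G·P_π·Gᵀ) = ε·( a_j + a_i − Σ_{r=1, r≠j}^{k} a_{π(r)}·a_r ) for some ε ∈ {1, −1}. -/
open Matrix

/-- The `k × (k+1)` matrix `(I_k | a)` whose first `k` columns form the identity matrix
and whose last column is the vector `a`. -/
def stdMat {F : Type*} [Zero F] [One F] {k : ℕ} (a : Fin k → F) :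
    Matrix (Fin k) (Fin (k + 1)) F :=
  Matrix.of fun s j => if (j : ℕ) = (s : ℕ) then 1 else if (j : ℕ) = k then a s else 0

/-!
Let `τ` be the permutation of `Fin k` obtained from `π` by cutting `k+1` out of its cycle, so
that `τ j = i`. Column `t` of `G P_π Gᵀ` is column `π t` of `G` plus `a_t` times column `i`, hence
`G P_π Gᵀ = P_τ + (a - e_i) e_jᵀ + e_i aᵀ`
is a rank-two perturbation of a permutation matrix. Factoring out `P_τ` and applying the
Weinstein–Aronszajn identity `det (1 + U V) = det (1 + V U)` leaves `sign τ` times a `2 × 2`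
determinant, which equals `a_i + a_j - Σ_{r ≠ j} a_{τ r} a_r`; so `ε = sign τ`.
-/

open Equiv

section PermMat

variable {R n m : Type*} [DecidableEq n]

theorem permMat_eq_transpose_permMatrix [Zero R] [One R] (σ : Perm n) :
    permMat R σ = (σ.permMatrix R)ᵀ := by
  ext i j
  simp [permMat, PEquiv.toMatrix_apply, Equiv.toPEquiv_apply]

variable [Fintype n]

theorem mul_permMat_apply [NonAssocSemiring R] (A : Matrix m n R) (σ : Perm n) (i : m) (j : n) :
    (A * permMat R σ) i j = A i (σ j) := by
  simp [mul_apply, permMat]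

theorem transpose_permMat_mul_apply [NonAssocSemiring R] (σ : Perm n) (A : Matrix n m R)
    (i : n) (j : m) : ((permMat R σ)ᵀ * A) i j = A (σ i) j := by
  simp [mul_apply, permMat]

theorem permMat_mul_transpose [NonAssocSemiring R] (σ : Perm n) :
    permMat R σ * (permMat R σ)ᵀ = 1 := by
  simp [permMat_eq_transpose_permMatrix, ← permMatrix_mul]

theorem det_permMat_add_mul [CommRing R] [Fintype m] [DecidableEq m] (σ : Perm n)
    (U : Matrix n m R) (V : Matrix m n R) :
    (permMat R σ + U * V).det = Perm.sign σ * (1 + V * ((permMat R σ)ᵀ * U)).det := by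
  have hfactor : permMat R σ + U * V = permMat R σ * (1 + (permMat R σ)ᵀ * U * V) := by
    rw [Matrix.mul_add, Matrix.mul_one, ← Matrix.mul_assoc, ← Matrix.mul_assoc,
      permMat_mul_transpose, Matrix.one_mul]
  rw [hfactor, det_mul, det_one_add_mul_comm, permMat_eq_transpose_permMatrix, det_transpose,
    det_permutation]

theorem det_permMat_add_vecMulVec_add_vecMulVec [CommRing R] (σ : Perm n) (x y z w : n → R) :
    (permMat R σ + vecMulVec x y + vecMulVec z w).det =
      Perm.sign σ * ((1 + y ⬝ᵥ x ∘ σ) * (1 + w ⬝ᵥ z ∘ σ) - (y ⬝ᵥ z ∘ σ) * (w ⬝ᵥ x ∘ σ)) := by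
  let U : Matrix n (Fin 2) R := of fun s => ![x s, z s]
  let V : Matrix (Fin 2) n R := of ![y, w]
  have hUV : vecMulVec x y + vecMulVec z w = U * V := by
    ext s t
    simp [U, V, mul_apply, Fin.sum_univ_two, vecMulVec_apply]
  have hentry : ∀ c d, (V * ((permMat R σ)ᵀ * U)) c d =
      ![y, w] c ⬝ᵥ (fun t => ![x t, z t] d) ∘ σ := by
    intro c d
    simp only [mul_apply (M := V), transpose_permMat_mul_apply]
    rfl
  rw [add_assoc, hUV, det_permMat_add_mul, det_fin_two]
  simp [hentry]

end PermMat

namespace Equiv.Perm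

variable {k : ℕ} {π : Perm (Fin (k + 1))} {i j t : Fin k}

/-- `t ↦ π t`, except that the preimage of `Fin.last k` is sent to `π (Fin.last k)`. -/
def removeLast (π : Perm (Fin (k + 1))) : Perm (Fin k) :=
  removeNone (finSuccEquivLast.permCongr π)

theorem castSucc_removeLast_apply_of_ne (h : π t.castSucc ≠ Fin.last k) :
    (π.removeLast t).castSucc = π t.castSucc := by
  have hsome : finSuccEquivLast.permCongr π (some t) = some ((π t.castSucc).castPred h) := by
    rw [permCongr_apply, finSuccEquivLast_symm_some, ← finSuccEquivLast_castSucc,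
      Fin.castSucc_castPred]
  have := removeNone_some _ ⟨_, hsome⟩
  rw [hsome, Option.some_inj] at this
  simp [removeLast, this]

theorem castSucc_removeLast_apply_of_eq (h : π t.castSucc = Fin.last k) :
    (π.removeLast t).castSucc = π (Fin.last k) := by
  have hlast : π (Fin.last k) ≠ Fin.last k := fun h' =>
    Fin.castSucc_ne_last t (π.injective (h.trans h'.symm))
  have hnone : finSuccEquivLast.permCongr π (some t) = none := by
    rw [permCongr_apply, finSuccEquivLast_symm_some, h, finSuccEquivLast_last]
  have := removeNone_none _ hnone
  rw [permCongr_apply, finSuccEquivLast_symm_none, ← Fin.castSucc_castPred _ hlast,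
    finSuccEquivLast_castSucc, Option.some_inj] at this
  simp [removeLast, this]

theorem removeLast_apply_of_eq (hi : π (Fin.last k) = i.castSucc)
    (hj : π j.castSucc = Fin.last k) : π.removeLast j = i :=
  Fin.castSucc_injective _ ((castSucc_removeLast_apply_of_eq hj).trans hi)

theorem castSucc_removeLast_apply_of_ne_of_eq (hj : π j.castSucc = Fin.last k) (ht : t ≠ j) :
    (π.removeLast t).castSucc = π t.castSucc :=
  castSucc_removeLast_apply_of_ne ((π.injective.ne ((Fin.castSucc_injective k).ne ht)).trans_eq hj)

end Equiv.Perm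

section StdMat

variable {R : Type*} {k : ℕ}

theorem stdMat_apply_castSucc [Zero R] [One R] (a : Fin k → R) (s t : Fin k) :
    stdMat a s t.castSucc = if s = t then 1 else 0 := by
  simp [stdMat, Fin.val_eq_val, eq_comm, t.isLt.ne']

theorem stdMat_apply_last [Zero R] [One R] (a : Fin k → R) (s : Fin k) :
    stdMat a s (Fin.last k) = a s := by
  simp [stdMat, s.isLt.ne']

theorem stdMat_mul_permMat_mul_transpose_apply [NonAssocSemiring R] (a : Fin k → R)
    (π : Perm (Fin (k + 1))) (s t : Fin k) :
    (stdMat a * permMat R π * (stdMat a)ᵀ) s t =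
      stdMat a s (π t.castSucc) + stdMat a s (π (Fin.last k)) * a t := by
  rw [mul_apply, Fin.sum_univ_castSucc]
  simp [mul_permMat_apply, stdMat_apply_castSucc, stdMat_apply_last]

variable {π : Perm (Fin (k + 1))} {i j : Fin k}

theorem stdMat_mul_permMat_mul_transpose_eq [Ring R] (a : Fin k → R)
    (hi : π (Fin.last k) = i.castSucc) (hj : π j.castSucc = Fin.last k) :
    stdMat a * permMat R π * (stdMat a)ᵀ = permMat R π.removeLast +
      vecMulVec (a - Pi.single i 1) (Pi.single j 1) + vecMulVec (Pi.single i 1) a := by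
  ext s t
  rw [stdMat_mul_permMat_mul_transpose_apply, hi, stdMat_apply_castSucc]
  by_cases ht : t = j
  · subst ht
    rw [hj, stdMat_apply_last]
    by_cases hs : s = i
    · simp [permMat, vecMulVec_apply, Perm.removeLast_apply_of_eq hi hj, hs]
    · simp [permMat, vecMulVec_apply, Perm.removeLast_apply_of_eq hi hj, hs, Ne.symm hs]
  · rw [← Perm.castSucc_removeLast_apply_of_ne_of_eq hj ht, stdMat_apply_castSucc]
    simp [permMat, vecMulVec_apply, Pi.single_apply, ht, eq_comm]

theorem snoc_zero_comp_perm_castSucc [AddGroup R] (a : Fin k → R)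
    (hi : π (Fin.last k) = i.castSucc) (hj : π j.castSucc = Fin.last k) :
    (fun t : Fin k => (Fin.snoc a 0 : Fin (k + 1) → R) (π t.castSucc)) =
      a ∘ π.removeLast - Pi.single j (a i) := by
  ext t
  by_cases ht : t = j
  · subst ht
    simp [hj, Perm.removeLast_apply_of_eq hi hj]
  · rw [← Perm.castSucc_removeLast_apply_of_ne_of_eq hj ht, Fin.snoc_castSucc]
    simp [ht]

theorem sum_filter_snoc_zero_perm_castSucc_mul [CommRing R] (a : Fin k → R)
    (hi : π (Fin.last k) = i.castSucc) (hj : π j.castSucc = Fin.last k) :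
    ∑ r ∈ Finset.univ.filter (fun r : Fin k => r.castSucc ≠ π⁻¹ (Fin.last k)),
      (Fin.snoc a 0 : Fin (k + 1) → R) (π r.castSucc) * a r =
        a ⬝ᵥ a ∘ π.removeLast - a j * a i := by
  -- the summand at `r = j` is `snoc a 0 (last) * a j = 0`, so the filter can be dropped
  have hdrop : ∀ r ∈ Finset.univ, (Fin.snoc a 0 : Fin (k + 1) → R) (π r.castSucc) * a r ≠ 0 →
      r.castSucc ≠ π⁻¹ (Fin.last k) := by
    rintro r - hr hrj
    rw [Perm.eq_inv_iff_eq.mp hrj] at hr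
    simp at hr
  rw [Finset.sum_filter_of_ne hdrop, ← dotProduct, snoc_zero_comp_perm_castSucc a hi hj,
    sub_dotProduct, single_dotProduct, dotProduct_comm]
  ring

end StdMat

/-- for `G = (I_k | a)` and a permutation `π` of `{1, …, k+1}` with
`π(k+1) = i ≠ k+1` and `j = π⁻¹(k+1)`, we have
`det(G·P_π·Gᵀ) = ±(a_j + a_i − Σ_{r ≠ j, r ≤ k} a_{π(r)}·a_r)`. -/
theorem stmt7 {F : Type*} [Field F] {k : ℕ} (a : Fin k → F)
    (π : Equiv.Perm (Fin (k + 1))) (hπ : π (Fin.last k) ≠ Fin.last k) :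
    ∃ ε : F, (ε = 1 ∨ ε = -1) ∧
      (stdMat a * permMat F π * (stdMat a)ᵀ).det =
        ε * ((Fin.snoc a 0 : Fin (k + 1) → F) (π⁻¹ (Fin.last k)) +
          (Fin.snoc a 0 : Fin (k + 1) → F) (π (Fin.last k)) -
          ∑ r ∈ Finset.univ.filter (fun r : Fin k => r.castSucc ≠ π⁻¹ (Fin.last k)),
            (Fin.snoc a 0 : Fin (k + 1) → F) (π r.castSucc) * a r) := by
  obtain ⟨i, hi⟩ : ∃ i : Fin k, π (Fin.last k) = i.castSucc :=
    ⟨_, (Fin.castSucc_castPred _ hπ).symm⟩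
  obtain ⟨j, hj⟩ : ∃ j : Fin k, π⁻¹ (Fin.last k) = j.castSucc :=
    ⟨_, (Fin.castSucc_castPred _ (by rw [Ne, Perm.inv_eq_iff_eq]; exact hπ.symm)).symm⟩
  have hj' : π j.castSucc = Fin.last k := (Perm.inv_eq_iff_eq.mp hj).symm
  have hτ : π.removeLast j = i := Perm.removeLast_apply_of_eq hi hj'
  have hsymm : π.removeLast.symm i = j := by rw [Equiv.symm_apply_eq, hτ]
  refine ⟨Perm.sign π.removeLast, ?_, ?_⟩
  · rcases Int.units_eq_one_or (Perm.sign π.removeLast) with h | h <;> simp [h]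
  rw [stdMat_mul_permMat_mul_transpose_eq a hi hj', det_permMat_add_vecMulVec_add_vecMulVec,
    sum_filter_snoc_zero_perm_castSucc_mul a hi hj', hi, hj, Fin.snoc_castSucc, Fin.snoc_castSucc]
  congr 1
  simp [Pi.sub_comp, Pi.single_comp_equiv, hsymm, single_dotProduct, dotProduct_single, hτ]
  ring
end

section
/- Let F be a field and G = (1 | a_1, …, a_{n−1}) a 1×n matrix over F whose first entry is 1. Then G is not an LCED matrix if and only if (n : F) = 0 (i.e., the characteristic of F divides n) and a_i = 1 for all i = 1,…,n−1. -/
open Matrix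

/-
For a row vector `v`, the `1 × 1` matrix `v P_σ vᵀ` is `∑ j, v (σ j) * v j`. Comparing the identity
with a transposition `(x y)` gives `(v x - v y) ^ 2`, so all these sums vanish exactly when `v` is
constant and `∑ j, v j ^ 2 = 0`; for `v = (1 | a)` this means `a = 1` and `n = 0` in `F`.
-/

theorem mul_permMat_mul_transpose_apply {R k n : Type*} [CommSemiring R] [Fintype n]
    [DecidableEq n] (G : Matrix k n R) (σ : Equiv.Perm n) (i i' : k) :
    (G * permMat R σ * Gᵀ) i i' = ∑ j, G i (σ j) * G i' j := by
  simp [Matrix.mul_apply, permMat]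

theorem not_isLCEDMatrix_row_iff {F n : Type*} [Field F] [Fintype n] [DecidableEq n]
    (v : n → F) :
    ¬ IsLCEDMatrix (of fun (_ : Fin 1) j => v j) ↔ ∀ σ : Equiv.Perm n, ∑ j, v (σ j) * v j = 0 := by
  simp only [IsLCEDMatrix, not_exists, isUnit_iff_isUnit_det, det_fin_one, isUnit_iff_ne_zero,
    not_not, mul_permMat_mul_transpose_apply, of_apply]

theorem sum_mul_self_sub_sum_swap_mul {R n : Type*} [CommRing R] [Fintype n] [DecidableEq n]
    (v : n → R) (x y : n) :
    ∑ j, v j * v j - ∑ j, v (Equiv.swap x y j) * v j = (v x - v y) ^ 2 := by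
  rcases eq_or_ne x y with rfl | hxy
  · simp
  rw [← Finset.sum_sub_distrib, ← Finset.sum_subset (Finset.subset_univ {x, y}),
    Finset.sum_pair hxy]
  · simp only [Equiv.swap_apply_left, Equiv.swap_apply_right]
    ring
  · intro j _ hj
    simp only [Finset.mem_insert, Finset.mem_singleton, not_or] at hj
    rw [Equiv.swap_apply_of_ne_of_ne hj.1 hj.2, sub_self]

theorem forall_perm_sum_mul_eq_zero_iff {R n : Type*} [CommRing R] [NoZeroDivisors R]
    [Fintype n] [DecidableEq n] (v : n → R) :
    (∀ σ : Equiv.Perm n, ∑ j, v (σ j) * v j = 0) ↔ (∀ x y, v x = v y) ∧ ∑ j, v j * v j = 0 := by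
  constructor
  · intro h
    have hsq : ∑ j, v j * v j = 0 := h 1
    refine ⟨fun x y => ?_, hsq⟩
    have := sum_mul_self_sub_sum_swap_mul v x y
    rwa [hsq, h, sub_zero, eq_comm, sq_eq_zero_iff, sub_eq_zero] at this
  · rintro ⟨hconst, hsq⟩ σ
    calc ∑ j, v (σ j) * v j = ∑ j, v j * v j :=
          Finset.sum_congr rfl fun j _ => by rw [hconst (σ j) j]
      _ = 0 := hsq

/-- the `1 × n` matrix `G = (1 | a₁, …, a_{n-1})` is not an LCED matrix iff
the characteristic of `F` divides `n` and every `a_i = 1`. -/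
theorem stmt9 {F : Type*} [Field F] {m : ℕ} (a : Fin m → F) :
    ¬ IsLCEDMatrix (Matrix.of fun (_ : Fin 1) (j : Fin (m + 1)) =>
        (Fin.cons 1 a : Fin (m + 1) → F) j) ↔
      ((m + 1 : ℕ) : F) = 0 ∧ ∀ i, a i = 1 := by
  set v : Fin (m + 1) → F := Fin.cons 1 a
  have hconst : (∀ x y, v x = v y) ↔ v = 1 :=
    ⟨fun h => funext fun x => h x 0, fun h x y => by simp [h]⟩
  have hone : v = 1 ↔ ∀ i, a i = 1 := by
    simp [v, funext_iff, Fin.forall_fin_succ]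
  rw [not_isLCEDMatrix_row_iff, forall_perm_sum_mul_eq_zero_iff, hconst, ← hone, and_comm]
  exact and_congr_left fun h => by simp [h]
end

section
/- Let F be a field of characteristic 2 and let M be a 3×3 symmetric matrix over F such that det(I_3 + P·M) = 0 for every 3×3 permutation matrix P (i.e., −1 is an eigenvalue of P·M for every permutation matrix P). Then the trace of M equals 1. -/
/-!
Since `1 + P M = P (P⁻¹ + M)`, the hypothesis says that `M + P` is singular for every permutation
matrix `P`. Put `N = M + 1` and `A = adj N`, so that `M + P = N + (P - 1)`. Taking `P = 1` gives
`det N = 0`, hence `adj A = det N • N = 0`: all `2 × 2` minors of the symmetric matrix `A`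
vanish.
A transposition `(i j)` gives `A i i + A j j - 2 A i j = 0`, so in characteristic 2 the diagonal of
`A` is constant, and then `A i j ^ 2 = A i i * A j j` makes all of `A` constant, squaring being
injective. For a 3-cycle `P`, the terms of `det (N + (P - 1))` involving `A` cancel once `A` is
constant, leaving the sum of the entries of `N`, which in characteristic 2 is `tr N = tr M + 3`.
-/

open Matrix

open Equiv

section Permutation

variable {R n : Type*} [DecidableEq n]

theorem permMat_eq_permMatrix_inv [Zero R] [One R] (σ : Perm n) :
    permMat R σ = σ⁻¹.permMatrix R := by
  ext i j
  simp [permMat, PEquiv.toMatrix_apply, Equiv.eq_symm_apply, eq_comm]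

theorem det_add_permMat_eq_zero_of_forall_det_one_add_mul [Fintype n] [CommRing R]
    {M : Matrix n n R} (h : ∀ σ : Perm n, det (1 + permMat R σ * M) = 0) (σ : Perm n) :
    det (M + permMat R σ) = 0 := by
  have hinv : permMat R σ⁻¹ * permMat R σ = 1 := by
    simp [permMat_eq_permMatrix_inv, ← permMatrix_mul]
  have hunit : IsUnit (det (permMat R σ⁻¹)) :=
    IsUnit.of_mul_eq_one _ (by rw [← det_mul, hinv, det_one])
  rw [← hunit.mul_right_eq_zero, ← det_mul, mul_add, hinv, add_comm]
  exact h σ⁻¹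

end Permutation

section FinThree

variable {R : Type*} [CommRing R]

theorem det_add_permMat_swap_sub_one (N : Matrix (Fin 3) (Fin 3) R) (i j : Fin 3) :
    det (N + (permMat R (swap i j) - 1)) =
      det N - (adjugate N i i + adjugate N j j - adjugate N i j - adjugate N j i) := by
  fin_cases i <;> fin_cases j <;>
    simp [det_fin_three, adjugate_fin_three, permMat, swap_apply_def, one_apply] <;> ring

/- This is `det (N + B) = det N + tr (adj N * B) + tr (N * adj B) + det B` for `B = P - 1`,
where `adj B` is the all-ones matrix and `det B = 0`. -/
theorem det_add_permMat_finRotate_sub_one (N : Matrix (Fin 3) (Fin 3) R) :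
    det (N + (permMat R (finRotate 3) - 1)) =
      det N + (adjugate N 0 1 + adjugate N 1 2 + adjugate N 2 0) - trace (adjugate N) +
        ∑ i, ∑ j, N i j := by
  simp [det_fin_three, adjugate_fin_three, permMat, one_apply, trace_fin_three, Fin.sum_univ_three]
  ring

theorem adjugate_apply_mul_adjugate_apply_of_det_eq_zero {N : Matrix (Fin 3) (Fin 3) R}
    (h : det N = 0) (i j : Fin 3) :
    adjugate N i j * adjugate N j i = adjugate N i i * adjugate N j j := by
  have hadj : adjugate (adjugate N) = 0 := by
    rw [adjugate_adjugate N (by simp), h]; simp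
  have hminor : ∀ k, adjugate (adjugate N) k k = 0 := fun k => by rw [hadj]; rfl
  simp only [adjugate_fin_three (adjugate N), Fin.forall_fin_succ] at hminor
  fin_cases i <;> fin_cases j <;> simp at hminor ⊢ <;> grind

section CharTwo

variable [CharP R 2] [NoZeroDivisors R]

theorem adjugate_apply_eq_of_det_add_permMat_sub_one {N : Matrix (Fin 3) (Fin 3) R}
    (hN : N.IsSymm) (h : ∀ σ, det (N + (permMat R σ - 1)) = 0) (i j : Fin 3) :
    adjugate N i j = adjugate N 0 0 := by
  have hA : (adjugate N).IsSymm := hN.adjugate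
  have hdet : det N = 0 := by simpa [permMat_eq_permMatrix_inv] using h 1
  have hdiag : ∀ i, adjugate N i i = adjugate N 0 0 := fun i => by
    have hswap := h (swap i 0)
    rw [det_add_permMat_swap_sub_one, hdet, hA.apply i 0] at hswap
    exact CharTwo.add_eq_zero.mp
      (by linear_combination -hswap + adjugate N i 0 * CharTwo.two_eq_zero (R := R))
  apply CharTwo.sq_injective
  calc adjugate N i j ^ 2 = adjugate N i j * adjugate N j i := by rw [sq, hA.apply i j]
    _ = adjugate N i i * adjugate N j j := adjugate_apply_mul_adjugate_apply_of_det_eq_zero hdet i j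
    _ = adjugate N 0 0 ^ 2 := by rw [hdiag i, hdiag j, sq]

theorem trace_eq_zero_of_det_add_permMat_sub_one {N : Matrix (Fin 3) (Fin 3) R}
    (hN : N.IsSymm) (h : ∀ σ, det (N + (permMat R σ - 1)) = 0) : trace N = 0 := by
  have hdet : det N = 0 := by simpa [permMat_eq_permMatrix_inv] using h 1
  have hrot := h (finRotate 3)
  simp only [det_add_permMat_finRotate_sub_one, hdet, trace_fin_three,
    adjugate_apply_eq_of_det_add_permMat_sub_one hN h, Fin.sum_univ_three] at hrot
  rw [trace_fin_three]
  linear_combination hrot - hN.apply 0 1 - hN.apply 0 2 - hN.apply 1 2 -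
    (N 0 1 + N 0 2 + N 1 2) * CharTwo.two_eq_zero (R := R)

end CharTwo

end FinThree

/-- over a field of characteristic 2, a symmetric `3 × 3` matrix `M` such
that `-1` is an eigenvalue of `P·M` for every permutation matrix `P` has trace `1`. -/
theorem stmt13 {F : Type*} [Field F] [CharP F 2] (M : Matrix (Fin 3) (Fin 3) F)
    (hM : M.IsSymm)
    (h : ∀ σ : Equiv.Perm (Fin 3),
      ((1 : Matrix (Fin 3) (Fin 3) F) + permMat F σ * M).det = 0) :
    M.trace = 1 := by
  have hN : ∀ σ, det (M + 1 + (permMat F σ - 1)) = 0 := fun σ => by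
    rw [add_add_sub_cancel]
    exact det_add_permMat_eq_zero_of_forall_det_one_add_mul h σ
  have htrace := trace_eq_zero_of_det_add_permMat_sub_one (hM.add isSymm_one) hN
  rw [trace_add, trace_one, Fintype.card_fin] at htrace
  linear_combination htrace - 2 * CharTwo.two_eq_zero (R := F)
end

section
/- Let F be a field (or more generally a commutative ring) and A = (a_{ij}) a k×k matrix over F with k ≥ 2. Then Σ_{π ∈ S_k} C_{P_π·A}(x) = k!·x^k − (k−1)!·( Σ_{i,j=1}^{k} a_{ij} )·x^{k−1}, where C_B(x) = det(x·I_k − B) denotes the characteristic polynomial of a k×k matrix B and P_π is the permutation matrix of π. -/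
/-!
Expanding each determinant by Leibniz, `det (X - Pπ A) = ∑ σ, sign σ ∏ i (δ_{σ i, i} X - a_{π⁻¹(σ i), i})`,
and substituting `τ = π⁻¹ σ` turns the sum over `π` into `∑ τ, charpoly Bτ`, where every row of
`Bτ` is the vector `(a_{τ j, j})_j`. Such a matrix has rank one, so its characteristic polynomial
is `X^k - tr Bτ • X^(k-1)`, and each entry `a_{ij}` occurs in `tr Bτ` for exactly the `(k-1)!`
permutations with `τ j = i`.
-/

open Matrix

open Finset Equiv Polynomial
open scoped Nat

theorem permMat_eq_toMatrix {R n : Type*} [Zero R] [One R] [DecidableEq n] (π : Perm n) :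
    permMat R π = π.symm.toPEquiv.toMatrix := by
  ext i j
  simp only [permMat, of_apply, PEquiv.toMatrix_apply, toPEquiv_apply, Option.mem_some_iff,
    Equiv.symm_apply_eq, eq_comm (a := i)]

section

variable {n : Type*} [Fintype n] [DecidableEq n]

theorem permMat_mul_s17 {R : Type*} [NonAssocSemiring R] (π : Perm n) (A : Matrix n n R) :
    permMat R π * A = A.submatrix π.symm id := by
  rw [permMat_eq_toMatrix, PEquiv.toMatrix_toPEquiv_mul]

theorem card_filter_perm_apply_eq (i j : n) :
    #{τ : Perm n | τ j = i} = (Fintype.card n - 1)! := by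
  have e : {τ : Perm n // τ j = i} ≃ Perm {a // a ≠ j} :=
    calc {τ : Perm n // τ j = i} ≃ {τ : Perm n // τ j = j} :=
          ((Equiv.mulLeft (swap i j)).subtypeEquiv fun τ => by simp [swap_apply_eq_iff]).symm
      _ ≃ {τ : Perm n // ∀ a, ¬a ≠ j → τ a = a} := Equiv.subtypeEquivRight (by simp)
      _ ≃ Perm {a // a ≠ j} := (Perm.subtypeEquivSubtypePerm _).symm
  rw [← Fintype.card_subtype, Fintype.card_congr e, Fintype.card_perm,
    Fintype.card_subtype_compl, Fintype.card_subtype_eq]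

theorem sum_perm_apply {M : Type*} [AddCommMonoid M] (g : n → M) (j : n) :
    ∑ τ : Perm n, g (τ j) = (Fintype.card n - 1)! • ∑ i, g i := by
  rw [← sum_fiberwise univ (· j), smul_sum]
  refine Fintype.sum_congr _ _ fun i => ?_
  rw [sum_congr rfl fun τ hτ => congrArg g (mem_filter.1 hτ).2, sum_const,
    card_filter_perm_apply_eq]

theorem sum_charpoly_submatrix_perm {R : Type*} [CommRing R] (A : Matrix n n R) :
    ∑ π : Perm n, (A.submatrix π id).charpoly =
      ∑ τ : Perm n, (vecMulVec 1 fun j => A (τ j) j).charpoly := by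
  simp only [charpoly, det_apply]
  rw [sum_comm]
  conv_rhs => rw [sum_comm]
  refine Fintype.sum_congr _ _ fun σ => ?_
  exact Fintype.sum_equiv (Equiv.mulRight σ) _ _ fun π => by simp [charmatrix_apply]

end

theorem stmt17_general {R : Type*} [CommRing R] {k : ℕ}
    (A : Matrix (Fin k) (Fin k) R) :
    ∑ π : Equiv.Perm (Fin k), (permMat R π * A).charpoly =
      Polynomial.C ((k.factorial : ℕ) : R) * Polynomial.X ^ k -
        Polynomial.C (((k - 1).factorial : R) * ∑ i, ∑ j, A i j) *
          Polynomial.X ^ (k - 1) := by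
  have sum_traces : ∑ τ : Perm (Fin k), ∑ j, A (τ j) j = ((k - 1)! : R) * ∑ i, ∑ j, A i j := by
    rw [sum_comm, sum_comm (f := A), mul_sum]
    refine Fintype.sum_congr _ _ fun j => ?_
    rw [sum_perm_apply (A · j), Fintype.card_fin, nsmul_eq_mul]
  simp only [permMat_mul_s17]
  rw [Fintype.sum_equiv (Equiv.inv (Perm (Fin k))) (fun π => (A.submatrix π.symm id).charpoly)
      (fun π => (A.submatrix π id).charpoly) fun _ => rfl,
    sum_charpoly_submatrix_perm]
  simp only [charpoly_vecMulVec, one_dotProduct, Fintype.card_fin, smul_eq_C_mul]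
  rw [sum_sub_distrib, sum_const, card_univ, Fintype.card_perm, Fintype.card_fin, ← sum_mul,
    ← map_sum, sum_traces, nsmul_eq_mul, map_natCast]

/-- for `k ≥ 2` and a `k × k` matrix `A`, the sum of the characteristic
polynomials of all row permutations of `A` is
`k!·x^k − (k−1)!·(Σ_{i,j} a_{ij})·x^{k−1}`. -/
theorem stmt17 {R : Type*} [CommRing R] {k : ℕ} (hk : 2 ≤ k)
    (A : Matrix (Fin k) (Fin k) R) :
    ∑ π : Equiv.Perm (Fin k), (permMat R π * A).charpoly =
      Polynomial.C ((k.factorial : ℕ) : R) * Polynomial.X ^ k -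
        Polynomial.C (((k - 1).factorial : R) * ∑ i, ∑ j, A i j) *
          Polynomial.X ^ (k - 1) :=
  stmt17_general A
end
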